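/- arXiv:1203.5578 — 3 statements merged into one kernel-verified Lean document; each statement's English description precedes it below -/
import Mathlib

section
/- Let (R, m) be a Noetherian local ring of dimension d, and let J ⊆ I = (J, h) be m-primary ideals of R, where I is generated by J together with one element h. Then e₀(J) − e₀(I) ≤ λ(R/(J : I)) · f₀(J), where e₀ denotes the Hilbert–Samuel multiplicity and f₀(J) is the multiplicity of the special fiber ring ⊕_{n≥0} Jⁿ/mJⁿ. -/
open Filter IsLocalRing Polynomial

/-- The length of an `R`-module `M`, as the Krull dimension of its submodule lattice. -/
noncomputable def mLength (R : Type*) (M : Type*) [CommRing R] [AddCommGroup M] [Module R M] :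
    WithBot ℕ∞ :=
  Order.krullDim (Submodule R M)

/-- The minimal number of generators of a submodule. -/
noncomputable def nu {R M : Type*} [CommRing R] [AddCommGroup M] [Module R M]
    (N : Submodule R M) : ℕ :=
  sInf {n | ∃ s : Finset M, s.card = n ∧ Submodule.span R (s : Set M) = N}

/-- `J` is a reduction of `I`: `J ⊆ I` and `I^(n+1) = J·Iⁿ` for some `n`
(equivalently, `I` is integral over `J`). -/
def IsReduction {R : Type*} [CommRing R] (J I : Ideal R) : Prop :=
  J ≤ I ∧ ∃ n, I ^ (n + 1) = J * I ^ n

/-- The reduction number of `I` with respect to `J`: the least `s` with `I^(s+1) = J·I^s`. -/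
noncomputable def redNum {R : Type*} [CommRing R] (J I : Ideal R) : ℕ :=
  sInf {s | I ^ (s + 1) = J * I ^ s}

/-- `Q` is a minimal reduction of the `m`-primary ideal `I` in a `d`-dimensional local ring:
a reduction of `I` generated by `d` elements (a parameter ideal). -/
def IsMinimalReduction {R : Type*} [CommRing R] (d : ℕ) (Q I : Ideal R) : Prop :=
  IsReduction Q I ∧ ∃ s : Finset R, s.card = d ∧ Q = Ideal.span (s : Set R)

/-- `HasMultiplicity I d e0` : for `n ≫ 0`,
`λ(R/Iⁿ) = e0·C(n+d−1, d) + (terms of degree < d in n)`;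
i.e. `e0 = e₀(I)` is the Hilbert–Samuel multiplicity of `I`. -/
def HasMultiplicity {R : Type*} [CommRing R] (I : Ideal R) (d : ℕ) (e0 : ℤ) : Prop :=
  ∃ (p : Polynomial ℚ) (lam : ℕ → ℕ), p.degree < (d : ℕ) ∧
    (∀ n, mLength R (R ⧸ I ^ n) = lam n) ∧
    ∀ᶠ n : ℕ in atTop,
      (lam n : ℚ) = e0 * ((n + d - 1).choose d) + p.eval (n : ℚ)

/-- `HasHilbertCoeffs I d e0 e1` : for `n ≫ 0`,
`λ(R/Iⁿ) = e0·C(n+d−1, d) − e1·C(n+d−2, d−1) + (terms of degree < d−1 in n)`;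
i.e. `e0 = e₀(I)` and `e1 = e₁(I)` are the first two Hilbert coefficients of `I`. -/
def HasHilbertCoeffs {R : Type*} [CommRing R] (I : Ideal R) (d : ℕ) (e0 e1 : ℤ) : Prop :=
  ∃ (p : Polynomial ℚ) (lam : ℕ → ℕ), p.degree < ((d - 1 : ℕ) : WithBot ℕ) ∧
    (∀ n, mLength R (R ⧸ I ^ n) = lam n) ∧
    ∀ᶠ n : ℕ in atTop,
      (lam n : ℚ) = e0 * ((n + d - 1).choose d) - e1 * ((n + d - 2).choose (d - 1))
        + p.eval (n : ℚ)

/-- `IsFiberMult f d f0` : the function `f` (e.g. `n ↦ ν(Jⁿ)`) agrees for `n ≫ 0` with a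
polynomial of degree `d − 1` in `n` with normalized leading coefficient `f0`. -/
def IsFiberMult (f : ℕ → ℕ) (d : ℕ) (f0 : ℕ) : Prop :=
  ∃ p : Polynomial ℚ, p.degree < ((d - 1 : ℕ) : WithBot ℕ) ∧
    ∀ᶠ n : ℕ in atTop,
      (f n : ℚ) = f0 * ((n + d - 2).choose (d - 1)) + p.eval (n : ℚ)

/-- `f0 = f₀(J)` is the multiplicity of the special fiber ring `⊕ Jⁿ/mJⁿ`, i.e. the
normalized leading coefficient of the polynomial giving `ν(Jⁿ)` for `n ≫ 0`. -/
def HasFiberMult {R : Type*} [CommRing R] (J : Ideal R) (d : ℕ) (f0 : ℕ) : Prop :=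
  IsFiberMult (fun n => nu (J ^ n)) d f0

/-!
Filter `Jⁿ ⊆ Iⁿ` by the ideals `Jᵃ Iᵇ` with `a + b = n`. Since `I = J + (h)`, each step
`J^(a+1) I^b ⊆ J^a I^(b+1)` only adds the elements `g h^(b+1)` for `g` running over a minimal
generating set of `Jᵃ`, and each of them is killed modulo the smaller ideal by `(J : I)`. Hence
`λ(R/Jⁿ) ≤ λ(R/Iⁿ) + λ(R/(J : I)) · Σ_{j<n} ν(Jʲ)` for every `n`. Summing
`ν(Jʲ) = f₀ C(j+d-2, d-1) + O(j^(d-2))` with the hockey-stick identity gives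
`Σ_{j<n} ν(Jʲ) ≤ f₀ C(n+d-1, d) + o(nᵈ)`, and comparing the coefficients of `C(n+d-1, d)` on
both sides gives the bound.
-/

theorem Module.length_eq_of_mLength_eq {R M : Type*} [CommRing R] [AddCommGroup M] [Module R M]
    {k : ℕ} (h : mLength R M = k) : Module.length R M = k := by
  rw [mLength, ← Module.coe_length] at h
  exact_mod_cast h

namespace Module

variable {R M : Type*} [CommRing R] [AddCommGroup M] [Module R M]

theorem length_span_singleton_le {A : Ideal R} {y : M} (hA : ∀ a ∈ A, a • y = 0) :
    length R (R ∙ y) ≤ length R (R ⧸ A) := by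
  rw [← (Ideal.quotTorsionOfEquivSpanSingleton R M y).length_eq]
  exact length_le_of_surjective _ (Submodule.factor_surjective
    fun a ha => (Ideal.mem_torsionOf_iff y a).mpr (hA a ha))

theorem length_quotient_le_length_quotient_sup_span_singleton {A : Ideal R} {N : Submodule R M}
    {x : M} (hA : ∀ a ∈ A, a • x ∈ N) :
    length R (M ⧸ N) ≤ length R (M ⧸ (N ⊔ R ∙ x)) + length R (R ⧸ A) := by
  set L := (R ∙ x).map N.mkQ
  have hL : L = R ∙ N.mkQ x := by simp [L, Submodule.map_span]
  rw [length_eq_add_of_exact L.subtype L.mkQ L.subtype_injective L.mkQ_surjective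
    (LinearMap.exact_subtype_mkQ L), (Submodule.quotientQuotientEquivQuotientSup N _).length_eq,
    add_comm, hL]
  gcongr
  refine length_span_singleton_le fun a ha => ?_
  rw [← map_smul, Submodule.mkQ_apply, Submodule.Quotient.mk_eq_zero]
  exact hA a ha

theorem length_quotient_le_length_quotient_sup_span {A : Ideal R} {N : Submodule R M}
    (s : Finset M) (hA : ∀ a ∈ A, ∀ x ∈ s, a • x ∈ N) :
    length R (M ⧸ N) ≤ length R (M ⧸ (N ⊔ Submodule.span R s)) + s.card * length R (R ⧸ A) := by
  classical
  induction s using Finset.induction_on with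
  | empty => rw [Finset.coe_empty, Submodule.span_empty, sup_bot_eq]; exact le_self_add
  | @insert x s hx ih =>
    have hAx : ∀ a ∈ A, a • x ∈ N ⊔ Submodule.span R s :=
      fun a ha => Submodule.mem_sup_left (hA a ha x (Finset.mem_insert_self x s))
    calc length R (M ⧸ N)
        ≤ length R (M ⧸ (N ⊔ Submodule.span R s)) + s.card * length R (R ⧸ A) :=
          ih fun a ha y hy => hA a ha y (Finset.mem_insert_of_mem hy)
      _ ≤ length R (M ⧸ (N ⊔ Submodule.span R s ⊔ R ∙ x)) + length R (R ⧸ A)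
            + s.card * length R (R ⧸ A) := by
          gcongr
          exact length_quotient_le_length_quotient_sup_span_singleton hAx
      _ = _ := by
          rw [Finset.coe_insert, Submodule.span_insert, Finset.card_insert_of_notMem hx,
            sup_comm (R ∙ x), ← sup_assoc]
          push_cast
          ring

end Module

theorem Submodule.FG.exists_finset_card_eq_nu {R M : Type*} [CommRing R] [AddCommGroup M]
    [Module R M] {N : Submodule R M} (hN : N.FG) :
    ∃ s : Finset M, s.card = nu N ∧ Submodule.span R (s : Set M) = N := by
  obtain ⟨s, hs⟩ := hN
  exact Nat.sInf_mem (s := {n | ∃ s : Finset M, s.card = n ∧ Submodule.span R (s : Set M) = N})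
    ⟨s.card, s, rfl, hs⟩

namespace Ideal

variable {R : Type*} [CommRing R]

theorem sup_pow_succ (J H : Ideal R) (k : ℕ) :
    (J ⊔ H) ^ (k + 1) = J * (J ⊔ H) ^ k ⊔ H ^ (k + 1) := by
  refine le_antisymm ?_ (sup_le ?_ (pow_right_mono le_sup_right _))
  · induction k with
    | zero => simp
    | succ k ih =>
      calc (J ⊔ H) ^ (k + 2) = J * (J ⊔ H) ^ (k + 1) ⊔ H * (J ⊔ H) ^ (k + 1) := by
            rw [pow_succ' _ (k + 1), sup_mul]
        _ ≤ J * (J ⊔ H) ^ (k + 1) ⊔ (J * (H * (J ⊔ H) ^ k) ⊔ H ^ (k + 2)) := by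
            gcongr
            calc H * (J ⊔ H) ^ (k + 1) ≤ H * (J * (J ⊔ H) ^ k ⊔ H ^ (k + 1)) := by gcongr
              _ = J * (H * (J ⊔ H) ^ k) ⊔ H ^ (k + 2) := by rw [mul_sup, mul_left_comm, ← pow_succ']
        _ ≤ J * (J ⊔ H) ^ (k + 1) ⊔ H ^ (k + 2) := by
            refine sup_le le_sup_left (sup_le (le_sup_of_le_left ?_) le_sup_right)
            rw [pow_succ' _ k]
            gcongr
            exact le_sup_right
  · rw [pow_succ']
    gcongr
    exact le_sup_left

variable [IsNoetherianRing R]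

theorem length_quotient_pow_mul_le {J A : Ideal R} {h : R} (hA : ∀ a ∈ A, a * h ∈ J) (m b : ℕ) :
    Module.length R (R ⧸ J ^ (m + 1) * (J ⊔ span {h}) ^ b)
      ≤ Module.length R (R ⧸ J ^ m * (J ⊔ span {h}) ^ (b + 1))
        + nu (J ^ m) * Module.length R (R ⧸ A) := by
  classical
  obtain ⟨s, hs, hspan⟩ := (IsNoetherian.noetherian (J ^ m)).exists_finset_card_eq_nu
  set t := s.image (· * h ^ (b + 1))
  have hlayer : J ^ m * (J ⊔ span {h}) ^ (b + 1)
      = J ^ (m + 1) * (J ⊔ span {h}) ^ b ⊔ Submodule.span R t := by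
    rw [sup_pow_succ, mul_sup, ← mul_assoc, ← pow_succ, span_singleton_pow, ← hspan,
      ← Ideal.span, span_mul_span', Set.mul_singleton, Finset.coe_image]
  have hAt : ∀ a ∈ A, ∀ x ∈ t, a • x ∈ J ^ (m + 1) * (J ⊔ span {h}) ^ b := by
    intro a ha x hx
    obtain ⟨g, hg, rfl⟩ := Finset.mem_image.mp hx
    have hg : g ∈ J ^ m := hspan ▸ Submodule.subset_span hg
    rw [smul_eq_mul, show a * (g * h ^ (b + 1)) = g * (a * h) * h ^ b by ring, pow_succ]
    exact mul_mem_mul (mul_mem_mul hg (hA a ha))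
      (pow_mem_pow (mem_sup_right (mem_span_singleton_self h)) b)
  rw [hlayer]
  refine (Module.length_quotient_le_length_quotient_sup_span t hAt).trans ?_
  gcongr
  exact hs ▸ Finset.card_image_le

theorem length_quotient_pow_add_le {J A : Ideal R} {h : R} (hA : ∀ a ∈ A, a * h ∈ J) (b m : ℕ) :
    Module.length R (R ⧸ J ^ (b + m))
      ≤ Module.length R (R ⧸ J ^ m * (J ⊔ span {h}) ^ b)
        + (∑ j ∈ Finset.range b, nu (J ^ (j + m))) * Module.length R (R ⧸ A) := by
  induction b generalizing m with
  | zero => rw [pow_zero, mul_one, zero_add]; exact le_self_add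
  | succ b ih =>
    calc Module.length R (R ⧸ J ^ (b + 1 + m))
        ≤ Module.length R (R ⧸ J ^ (m + 1) * (J ⊔ span {h}) ^ b)
          + (∑ j ∈ Finset.range b, nu (J ^ (j + (m + 1)))) * Module.length R (R ⧸ A) := by
          rw [add_right_comm, add_assoc]
          exact ih (m + 1)
      _ ≤ Module.length R (R ⧸ J ^ m * (J ⊔ span {h}) ^ (b + 1))
          + nu (J ^ m) * Module.length R (R ⧸ A)
          + (∑ j ∈ Finset.range b, nu (J ^ (j + (m + 1)))) * Module.length R (R ⧸ A) := by
          gcongr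
          exact length_quotient_pow_mul_le hA m b
      _ = _ := by
          rw [Finset.sum_range_succ', zero_add, Nat.cast_add, add_mul, add_assoc,
            add_comm (_ * _)]
          simp only [add_right_comm _ 1 m, add_assoc _ m 1]

theorem length_quotient_pow_le {J A : Ideal R} {h : R} (hA : ∀ a ∈ A, a * h ∈ J) (n : ℕ) :
    Module.length R (R ⧸ J ^ n)
      ≤ Module.length R (R ⧸ (J ⊔ span {h}) ^ n)
        + (∑ j ∈ Finset.range n, nu (J ^ j)) * Module.length R (R ⧸ A) := by
  have := length_quotient_pow_add_le hA n 0
  rwa [pow_zero, one_mul] at this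

end Ideal

theorem isLittleO_of_eventually_eq_add_eval {f g : ℕ → ℚ} {p : ℚ[X]} {e : ℕ}
    (hp : p.degree < e) (h : ∀ᶠ n in atTop, f n = g n + p.eval (n : ℚ)) :
    (fun n => f n - g n) =o[atTop] fun n => (n : ℚ) ^ e := by
  have hX : p.degree < (X ^ e : ℚ[X]).degree := by rwa [degree_X_pow]
  refine ((isLittleO_atTop_of_degree_lt p _ hX).comp_tendsto
    tendsto_natCast_atTop_atTop).congr' ?_ (by simp [Function.comp_def])
  filter_upwards [h] with n hn
  simp [hn]

theorem Asymptotics.IsLittleO.sum_range_pow {r : ℕ → ℚ} {e : ℕ}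
    (h : r =o[atTop] fun n => (n : ℚ) ^ e) :
    (fun n => ∑ j ∈ Finset.range n, r j) =o[atTop] fun n => (n : ℚ) ^ (e + 1) := by
  have hnorm (n : ℕ) : ‖(n : ℚ)‖ = n := by
    rw [← Rat.norm_cast_real, Rat.cast_natCast, Real.norm_natCast]
  have hr : r =o[atTop] fun j => ((j : ℝ) + 1) ^ e :=
    h.trans_isBigO <| isBigO_of_le _ fun j => by
      rw [norm_pow, norm_pow, hnorm, Real.norm_of_nonneg (by positivity)]
      gcongr
      linarith
  have hsum : Tendsto (fun n => ∑ j ∈ Finset.range n, ((j : ℝ) + 1) ^ e) atTop atTop := by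
    refine tendsto_atTop_mono (fun n => ?_) tendsto_natCast_atTop_atTop
    calc (n : ℝ) = ∑ _j ∈ Finset.range n, (1 : ℝ) := by simp
      _ ≤ _ := Finset.sum_le_sum fun j _ => one_le_pow₀ (by linarith [j.cast_nonneg (α := ℝ)])
  refine (hr.sum_range (fun j => by positivity) hsum).trans_isBigO <| isBigO_of_le _ fun n => ?_
  rw [Real.norm_of_nonneg (by positivity), norm_pow, hnorm, pow_succ']
  calc ∑ j ∈ Finset.range n, ((j : ℝ) + 1) ^ e ≤ ∑ _j ∈ Finset.range n, (n : ℝ) ^ e :=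
        Finset.sum_le_sum fun j hj => by
          gcongr
          exact_mod_cast Finset.mem_range.mp hj
    _ = n * n ^ e := by simp

theorem sum_range_choose_le {d : ℕ} (hd : 1 ≤ d) (n : ℕ) :
    ∑ j ∈ Finset.range n, (j + d - 2).choose (d - 1) ≤ (n + d - 1).choose d := by
  calc ∑ j ∈ Finset.range n, (j + d - 2).choose (d - 1)
      ≤ ∑ j ∈ Finset.range n, (j + (d - 1)).choose (d - 1) :=
        Finset.sum_le_sum fun j _ => Nat.choose_le_choose _ (by omega)
    _ = (n + d - 1).choose d := by
        rcases n with _ | n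
        · simp [Nat.choose_eq_zero_of_lt (by omega : d - 1 < d)]
        · rw [Nat.sum_range_add_choose, show n + (d - 1) + 1 = n + 1 + d - 1 by omega,
            Nat.sub_add_cancel hd]

theorem IsFiberMult.exists_sum_le {f : ℕ → ℕ} {d f0 : ℕ} (hd : 1 ≤ d) (hf : IsFiberMult f d f0) :
    ∃ T : ℕ → ℚ, T =o[atTop] (fun n => (n : ℚ) ^ d) ∧
      ∀ n, ∑ j ∈ Finset.range n, (f j : ℚ) ≤ f0 * (n + d - 1).choose d + T n := by
  obtain ⟨p, hp, hev⟩ := hf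
  refine ⟨fun n => ∑ j ∈ Finset.range n, ((f j : ℚ) - f0 * (j + d - 2).choose (d - 1)), ?_,
    fun n => ?_⟩
  · have := (isLittleO_of_eventually_eq_add_eval hp hev).sum_range_pow
    rwa [Nat.sub_add_cancel hd] at this
  · have hC : (f0 : ℚ) * ∑ j ∈ Finset.range n, ((j + d - 2).choose (d - 1) : ℚ)
        ≤ f0 * (n + d - 1).choose d := by
      gcongr
      exact_mod_cast sum_range_choose_le hd n
    simp only [Finset.sum_sub_distrib, ← Finset.mul_sum]
    linarith

theorem nonpos_of_eventually_mul_choose_le {a : ℚ} {d : ℕ} {E : ℕ → ℚ}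
    (hE : E =o[atTop] fun n => (n : ℚ) ^ d)
    (h : ∀ᶠ n in atTop, a * (n + d - 1).choose d ≤ E n) : a ≤ 0 := by
  by_contra! ha
  have hlim : a / d.factorial ≤ 0 := by
    refine ge_of_tendsto hE.tendsto_div_nhds_zero ?_
    filter_upwards [h, eventually_gt_atTop 0] with n hn hn0
    have hchoose := Nat.pow_le_choose (α := ℚ) d (n + d - 1)
    rw [show n + d - 1 + 1 - d = n by omega] at hchoose
    rw [le_div_iff₀ (by positivity)]
    calc a / d.factorial * n ^ d = a * (n ^ d / d.factorial) := by ring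
      _ ≤ a * (n + d - 1).choose d := by gcongr
      _ ≤ E n := hn
  have : 0 < a / d.factorial := by positivity
  linarith

theorem e0_sub_e0_le_general
    (R : Type*) [CommRing R] [IsNoetherianRing R]
    (d : ℕ) (hd : 1 ≤ d)
    (J I : Ideal R) (h : R) (hJI : I = J ⊔ Ideal.span {h})
    (e0J e0I : ℤ) (hJ0 : HasMultiplicity J d e0J) (hI0 : HasMultiplicity I d e0I)
    (f0 : ℕ) (hf0 : HasFiberMult J d f0)
    (lam : ℕ) (hlam : mLength R (R ⧸ (Submodule.colon J I)) = (lam : WithBot ℕ∞)) :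
    e0J - e0I ≤ (lam : ℤ) * f0 := by
  obtain ⟨pJ, lJ, hpJ, hlJ, hevJ⟩ := hJ0
  obtain ⟨pI, lI, hpI, hlI, hevI⟩ := hI0
  obtain ⟨T, hT, hS⟩ := hf0.exists_sum_le hd
  have hA : ∀ a ∈ Submodule.colon J I, a * h ∈ J := fun a ha =>
    Submodule.mem_colon.mp ha h (hJI ▸ Ideal.mem_sup_right (Ideal.mem_span_singleton_self h))
  have hlen (n : ℕ) : (lJ n : ℚ) ≤ lI n + (∑ j ∈ Finset.range n, (nu (J ^ j) : ℚ)) * lam := by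
    have := Ideal.length_quotient_pow_le hA n
    rw [← hJI, Module.length_eq_of_mLength_eq (hlJ n), Module.length_eq_of_mLength_eq (hlI n),
      Module.length_eq_of_mLength_eq hlam] at this
    exact_mod_cast (show lJ n ≤ lI n + (∑ j ∈ Finset.range n, nu (J ^ j)) * lam by
      exact_mod_cast this)
  have hE := ((isLittleO_of_eventually_eq_add_eval hpI hevI).sub
    (isLittleO_of_eventually_eq_add_eval hpJ hevJ)).add (hT.const_mul_left (lam : ℚ))
  have key : ((e0J - e0I - lam * f0 : ℤ) : ℚ) ≤ 0 := by
    refine nonpos_of_eventually_mul_choose_le hE (Eventually.of_forall fun n => ?_)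
    have := mul_le_mul_of_nonneg_right (hS n) (Nat.cast_nonneg (α := ℚ) lam)
    push_cast
    linarith [hlen n]
  have : e0J - e0I - lam * f0 ≤ 0 := by exact_mod_cast key
  linarith

/-- Let `(R, m)` be a Noetherian local ring of dimension `d ≥ 1` and `J ⊆ I = (J, h)`
`m`-primary ideals. Then `e₀(J) − e₀(I) ≤ λ(R/(J:I))·f₀(J)`. -/
theorem e0_sub_e0_le
    (R : Type*) [CommRing R] [IsNoetherianRing R] [IsLocalRing R]
    (d : ℕ) (hd : 1 ≤ d) (hdim : ringKrullDim R = d)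
    (J I : Ideal R) (h : R) (hJI : I = J ⊔ Ideal.span {h})
    (hJ : J.radical = maximalIdeal R) (hI : I.radical = maximalIdeal R)
    (e0J e0I : ℤ) (hJ0 : HasMultiplicity J d e0J) (hI0 : HasMultiplicity I d e0I)
    (f0 : ℕ) (hf0 : HasFiberMult J d f0)
    (lam : ℕ) (hlam : mLength R (R ⧸ (Submodule.colon J I)) = (lam : WithBot ℕ∞)) :
    e0J - e0I ≤ (lam : ℤ) * f0 :=
  e0_sub_e0_le_general R d hd J I h hJI e0J e0I hJ0 hI0 f0 hf0 lam hlam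
end

section
/- Let (R, m) be a Noetherian local ring of dimension d ≥ 1, J an m-primary ideal, and I = (J, h₁, …, h_m) integral over J with reduction number s = red_J(I). Then f₀(I) ≤ (1 + λ(R/(J : I)) · [binom(m+s, s) − 1]) · f₀(J). -/
open Filter IsLocalRing Polynomial

/-!
For `n ≥ s = red_J(I)` we have `Iⁿ = Jⁿ⁻ˢ Iˢ = ∑_{k ≤ s} Jⁿ⁻ᵏ Hᵏ` with `H = (h₁, …, h_m)`,
and `Hᵏ` is generated by the `C(m+k−1, k)` monomials of degree `k` in the `hᵢ`. Hence
`ν(Iⁿ) ≤ ∑_{k ≤ s} C(m+k−1, k) ν(Jⁿ⁻ᵏ)`, and comparing leading coefficients gives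
`f₀(I) ≤ C(m+s, s) f₀(J)` by the hockey-stick identity. This is at most the stated bound when
`λ(R/(J : I)) ≥ 1`, while `λ(R/(J : I)) = 0` forces `I = J` and `s = 0`.
-/

/-- `IsFiberMult` with `=` weakened to `≤`: `B` bounds the normalized leading coefficient. -/
def IsFiberMultLE (f : ℕ → ℕ) (d B : ℕ) : Prop :=
  ∃ p : ℚ[X], p.degree < ((d - 1 : ℕ) : WithBot ℕ) ∧
    ∀ᶠ n : ℕ in atTop, (f n : ℚ) ≤ B * ((n + d - 2).choose (d - 1)) + p.eval (n : ℚ)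

open Nat in
theorem pow_div_factorial_le_choose {n : ℕ} (hn : 1 ≤ n) (d : ℕ) :
    (n : ℚ) ^ (d - 1) / (d - 1)! ≤ (n + d - 2).choose (d - 1) := by
  rcases d with _ | d
  · simp
  · have := Nat.pow_le_choose (α := ℚ) d (n + d - 1)
    rwa [show n + d - 1 + 1 - d = n by omega] at this

theorem not_eventually_mul_pow_le_eval {c : ℚ} (hc : 0 < c) {e : ℕ} {w : ℚ[X]}
    (hw : w.degree < e) : ¬ ∀ᶠ n : ℕ in atTop, c * (n : ℚ) ^ e ≤ w.eval (n : ℚ) := by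
  intro h
  have hdeg : w.degree < (C c * X ^ e).degree := by rwa [degree_C_mul_X_pow e hc.ne']
  have hlim := ((div_tendsto_atTop_zero_of_degree_lt w _ hdeg).comp
    tendsto_natCast_atTop_atTop).eventually (gt_mem_nhds one_pos)
  obtain ⟨n, hle, hlt, hn⟩ := (h.and (hlim.and (eventually_ge_atTop 1))).exists
  have hpos : 0 < c * (n : ℚ) ^ e := by positivity
  simp only [Function.comp_apply, eval_mul, eval_C, eval_pow, eval_X] at hlt
  rw [div_lt_one hpos] at hlt
  linarith

theorem IsFiberMult.isFiberMultLE {f : ℕ → ℕ} {d A : ℕ} (hf : IsFiberMult f d A) :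
    IsFiberMultLE f d A :=
  let ⟨p, hp, hpf⟩ := hf
  ⟨p, hp, hpf.mono fun _ h => h.le⟩

open Nat in
theorem IsFiberMult.le_of_isFiberMultLE {f : ℕ → ℕ} {d A B : ℕ} (hA : IsFiberMult f d A)
    (hB : IsFiberMultLE f d B) : A ≤ B := by
  obtain ⟨p, hp, hpf⟩ := hA
  obtain ⟨q, hq, hqf⟩ := hB
  by_contra! hBA
  have hAB : (0 : ℚ) < A - B := sub_pos.mpr (by exact_mod_cast hBA)
  refine not_eventually_mul_pow_le_eval (div_pos hAB (by positivity : (0 : ℚ) < (d - 1)!))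
    ((degree_sub_le q p).trans_lt (max_lt hq hp)) ?_
  filter_upwards [hpf, hqf, eventually_ge_atTop 1] with n hpn hqn hn
  calc (A - B : ℚ) / (d - 1)! * n ^ (d - 1) = (A - B) * (n ^ (d - 1) / (d - 1)!) := by ring
    _ ≤ (A - B) * (n + d - 2).choose (d - 1) :=
      mul_le_mul_of_nonneg_left (pow_div_factorial_le_choose hn d) hAB.le
    _ ≤ (q - p).eval (n : ℚ) := by rw [eval_sub]; linarith

namespace IsFiberMultLE

variable {f g : ℕ → ℕ} {d B B' : ℕ}

theorem of_eventually_le (hf : IsFiberMultLE f d B) (hgf : ∀ᶠ n in atTop, g n ≤ f n) :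
    IsFiberMultLE g d B :=
  let ⟨p, hp, hpf⟩ := hf
  ⟨p, hp, (hpf.and hgf).mono fun _ h => (Nat.cast_le.mpr h.2).trans h.1⟩

theorem add (hf : IsFiberMultLE f d B) (hg : IsFiberMultLE g d B') :
    IsFiberMultLE (fun n => f n + g n) d (B + B') := by
  obtain ⟨p, hp, hpf⟩ := hf
  obtain ⟨q, hq, hqg⟩ := hg
  refine ⟨p + q, (degree_add_le p q).trans_lt (max_lt hp hq), ?_⟩
  filter_upwards [hpf, hqg] with n hpn hqn
  push_cast
  rw [eval_add]
  linarith

theorem const_mul (hf : IsFiberMultLE f d B) (c : ℕ) :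
    IsFiberMultLE (fun n => c * f n) d (c * B) := by
  obtain ⟨p, hp, hpf⟩ := hf
  refine ⟨(c : ℚ) • p, (degree_smul_le _ _).trans_lt hp, ?_⟩
  filter_upwards [hpf] with n hpn
  push_cast
  rw [eval_smul, smul_eq_mul]
  nlinarith [(Nat.cast_nonneg c : (0 : ℚ) ≤ c)]

theorem comp_sub (hf : IsFiberMultLE f d B) (k : ℕ) :
    IsFiberMultLE (fun n => f (n - k)) d B := by
  obtain ⟨p, hp, hpf⟩ := hf
  refine ⟨taylor (-(k : ℚ)) p, by rwa [degree_taylor], ?_⟩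
  filter_upwards [(tendsto_sub_atTop_nat k).eventually hpf, eventually_ge_atTop k]
    with n hpn hkn
  rw [taylor_eval, ← sub_eq_add_neg, ← Nat.cast_sub hkn]
  refine hpn.trans (add_le_add_left (mul_le_mul_of_nonneg_left ?_ (Nat.cast_nonneg _)) _)
  exact_mod_cast Nat.choose_le_choose _ (by omega)

theorem sum_mul_comp_sub (hf : IsFiberMultLE f d B) (t : Finset ℕ) (c : ℕ → ℕ) :
    IsFiberMultLE (fun n => ∑ k ∈ t, c k * f (n - k)) d ((∑ k ∈ t, c k) * B) := by
  classical
  induction t using Finset.induction_on with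
  | empty => exact ⟨0, by simp, by simp⟩
  | insert a t ha ih =>
    simp only [Finset.sum_insert ha, add_mul]
    exact ((hf.comp_sub a).const_mul (c a)).add ih

end IsFiberMultLE

section NumGenerators

variable {R M : Type*} [CommRing R] [AddCommGroup M] [Module R M]

theorem nu_le_card {N : Submodule R M} {t : Finset M} (ht : Submodule.span R (t : Set M) = N) :
    nu N ≤ t.card :=
  Nat.sInf_le ⟨t, rfl, ht⟩

theorem Submodule.FG.exists_card_eq_nu {N : Submodule R M} (hN : N.FG) :
    ∃ t : Finset M, t.card = nu N ∧ Submodule.span R (t : Set M) = N :=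
  let ⟨t, ht⟩ := hN
  Nat.sInf_mem (s := {n | ∃ t : Finset M, t.card = n ∧ Submodule.span R (t : Set M) = N})
    ⟨t.card, t, rfl, ht⟩

theorem nu_bot : nu (⊥ : Submodule R M) = 0 :=
  Nat.le_zero.mp (nu_le_card (t := ∅) (by simp))

theorem nu_sup_le {N N' : Submodule R M} (hN : N.FG) (hN' : N'.FG) :
    nu (N ⊔ N') ≤ nu N + nu N' := by
  classical
  obtain ⟨t, htcard, htspan⟩ := hN.exists_card_eq_nu
  obtain ⟨u, hucard, huspan⟩ := hN'.exists_card_eq_nu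
  calc nu (N ⊔ N') ≤ (t ∪ u).card :=
        nu_le_card (by rw [Finset.coe_union, Submodule.span_union, htspan, huspan])
    _ ≤ nu N + nu N' := htcard ▸ hucard ▸ Finset.card_union_le t u

theorem nu_sum_le {ι : Type*} (s : Finset ι) {N : ι → Submodule R M} (hN : ∀ i ∈ s, (N i).FG) :
    nu (∑ i ∈ s, N i) ≤ ∑ i ∈ s, nu (N i) := by
  classical
  induction s using Finset.induction_on with
  | empty => simp [nu_bot]
  | insert a s ha ih =>
    rw [Finset.sum_insert ha, Finset.sum_insert ha]
    have hs : ∀ i ∈ s, (N i).FG := fun i hi => hN i (Finset.mem_insert_of_mem hi)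
    calc nu (N a ⊔ ∑ i ∈ s, N i) ≤ nu (N a) + nu (∑ i ∈ s, N i) :=
          nu_sup_le (hN a (Finset.mem_insert_self a s)) (Submodule.fg_finset_sup s _ hs)
      _ ≤ nu (N a) + ∑ i ∈ s, nu (N i) := Nat.add_le_add_left (ih hs) _

open scoped Pointwise in
theorem nu_mul_le {a b : Ideal R} (ha : a.FG) (hb : b.FG) : nu (a * b) ≤ nu a * nu b := by
  classical
  obtain ⟨t, htcard, htspan⟩ := Submodule.FG.exists_card_eq_nu ha
  obtain ⟨u, hucard, huspan⟩ := Submodule.FG.exists_card_eq_nu hb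
  calc nu (a * b) ≤ (t * u).card :=
        nu_le_card (by
          rw [Finset.coe_mul]
          exact (Ideal.span_mul_span' _ _).symm.trans congr($htspan * $huspan))
    _ ≤ nu a * nu b := htcard ▸ hucard ▸ Finset.card_mul_le

end NumGenerators

open scoped Pointwise in
theorem Set.range_pow_eq_range_sym {ι M : Type*} [CommMonoid M] (h : ι → M) (k : ℕ) :
    Set.range h ^ k = Set.range fun x : Sym ι k => ((x : Multiset ι).map h).prod := by
  ext a
  rw [Set.mem_pow]
  constructor
  · rintro ⟨f, rfl⟩
    choose j hj using fun i => (f i).2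
    refine ⟨⟨(List.ofFn j : Multiset ι), by simp⟩, ?_⟩
    simp [List.map_ofFn, Function.comp_def, hj]
  · rintro ⟨⟨s, hs⟩, rfl⟩
    induction s using Quot.inductionOn with | h l => ?_
    simp only [Multiset.quot_mk_to_coe'', Multiset.coe_card] at hs
    subst hs
    exact ⟨fun i => ⟨h (l.get i), Set.mem_range_self _⟩, by simp⟩

section Reduction

variable {R : Type*} [CommRing R]

theorem nu_span_range_pow_le {ι : Type*} [Fintype ι] (h : ι → R) (k : ℕ) :
    nu (Ideal.span (Set.range h) ^ k) ≤ (Fintype.card ι).multichoose k := by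
  classical
  calc nu (Ideal.span (Set.range h) ^ k)
      ≤ (Finset.univ.image fun x : Sym ι k => ((x : Multiset ι).map h).prod).card :=
        nu_le_card (by
          rw [Finset.coe_image, Finset.coe_univ, Set.image_univ, ← Set.range_pow_eq_range_sym,
            Ideal.span, Submodule.span_pow])
    _ ≤ Fintype.card (Sym ι k) := Finset.card_image_le
    _ = (Fintype.card ι).multichoose k := Sym.card_sym_eq_multichoose ι k

theorem pow_add_eq_of_pow_succ_eq {J I : Ideal R} {s : ℕ} (hs : I ^ (s + 1) = J * I ^ s)
    (k : ℕ) : I ^ (s + k) = J ^ k * I ^ s := by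
  induction k with
  | zero => simp
  | succ k ih => rw [← add_assoc, pow_succ, ih, mul_assoc, ← pow_succ, hs]; ring

theorem sup_pow_eq_sum_of_pow_succ_eq {J H : Ideal R} {s n : ℕ}
    (hs : (J ⊔ H) ^ (s + 1) = J * (J ⊔ H) ^ s) (hn : s ≤ n) :
    (J ⊔ H) ^ n = ∑ k ∈ Finset.range (s + 1), J ^ (n - k) * H ^ k := by
  obtain ⟨k, rfl⟩ := Nat.exists_eq_add_of_le hn
  rw [pow_add_eq_of_pow_succ_eq hs, sup_comm, ← Submodule.add_eq_sup, add_pow, Finset.mul_sum]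
  refine Finset.sum_congr rfl fun i hi => ?_
  have his : i ≤ s := Finset.mem_range_succ_iff.mp hi
  rw [Ideal.natCast_eq_top (Nat.choose_pos his).ne', ← Ideal.one_eq_top, mul_one, mul_left_comm,
    ← pow_add, show k + (s - i) = s + k - i by omega, mul_comm]

theorem nu_pow_le_sum_of_pow_succ_eq [IsNoetherianRing R] {ι : Type*} [Fintype ι]
    {J I : Ideal R} (h : ι → R) (hJI : I = J ⊔ Ideal.span (Set.range h)) {s n : ℕ}
    (hs : I ^ (s + 1) = J * I ^ s) (hn : s ≤ n) :
    nu (I ^ n) ≤ ∑ k ∈ Finset.range (s + 1), (Fintype.card ι).multichoose k * nu (J ^ (n - k)) := by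
  subst hJI
  rw [sup_pow_eq_sum_of_pow_succ_eq hs hn]
  refine (nu_sum_le _ fun _ _ => IsNoetherian.noetherian _).trans
    (Finset.sum_le_sum fun k _ => ?_)
  calc nu (J ^ (n - k) * Ideal.span (Set.range h) ^ k)
      ≤ nu (J ^ (n - k)) * nu (Ideal.span (Set.range h) ^ k) :=
        nu_mul_le (IsNoetherian.noetherian _) (IsNoetherian.noetherian _)
    _ ≤ (Fintype.card ι).multichoose k * nu (J ^ (n - k)) := by
        rw [mul_comm]; exact Nat.mul_le_mul_right _ (nu_span_range_pow_le h k)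

theorem isFiberMultLE_nu_pow_of_pow_succ_eq [IsNoetherianRing R] {J I : Ideal R}
    {m d f0 s : ℕ} (h : Fin m → R) (hJI : I = J ⊔ Ideal.span (Set.range h))
    (hs : I ^ (s + 1) = J * I ^ s) (hJ : HasFiberMult J d f0) :
    IsFiberMultLE (fun n => nu (I ^ n)) d ((m + s).choose s * f0) := by
  have hsum := hJ.isFiberMultLE.sum_mul_comp_sub (Finset.range (s + 1)) m.multichoose
  rw [Nat.sum_range_multichoose, ← Nat.choose_symm_add, Nat.add_comm s m] at hsum
  refine hsum.of_eventually_le ((eventually_ge_atTop s).mono fun n hn => ?_)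
  simpa using nu_pow_le_sum_of_pow_succ_eq h hJI hs hn

theorem redNum_self (J : Ideal R) : redNum J J = 0 :=
  Nat.sInf_eq_zero.mpr (Or.inl (by simp [pow_succ']))

end Reduction

theorem mLength_eq_zero_iff {R M : Type*} [CommRing R] [AddCommGroup M] [Module R M] :
    mLength R M = 0 ↔ Subsingleton M :=
  Order.krullDim_eq_zero_iff_of_orderTop.trans (Submodule.subsingleton_iff R)

theorem f0_le_f0_bound_general
    (R : Type*) [CommRing R] [IsNoetherianRing R]
    (d : ℕ)
    (J I : Ideal R) (m : ℕ) (h : Fin m → R) (hJI : I = J ⊔ Ideal.span (Set.range h))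
    (hred : IsReduction J I)
    (f0J f0I : ℕ) (hf0J : HasFiberMult J d f0J) (hf0I : HasFiberMult I d f0I)
    (lam : ℕ) (hlam : mLength R (R ⧸ (Submodule.colon J I)) = (lam : WithBot ℕ∞)) :
    (f0I : ℤ) ≤ (1 + (lam : ℤ) * ((m + redNum J I).choose (redNum J I) - 1)) * f0J := by
  have hs : I ^ (redNum J I + 1) = J * I ^ redNum J I := Nat.sInf_mem hred.2
  have key : f0I ≤ (m + redNum J I).choose (redNum J I) * f0J :=
    IsFiberMult.le_of_isFiberMultLE hf0I (isFiberMultLE_nu_pow_of_pow_succ_eq h hJI hs hf0J)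
  rcases Nat.eq_zero_or_pos lam with rfl | hlam_pos
  · have hIJ : I ≤ J := by
      rw [Nat.cast_zero, mLength_eq_zero_iff, Submodule.Quotient.subsingleton_iff,
        Submodule.colon_eq_top_iff_subset] at hlam
      exact hlam
    obtain rfl := le_antisymm hIJ hred.1
    rw [redNum_self] at key
    simpa using key
  · have hchoose : 1 ≤ (m + redNum J I).choose (redNum J I) := Nat.choose_pos (by omega)
    calc (f0I : ℤ) ≤ (m + redNum J I).choose (redNum J I) * f0J := by exact_mod_cast key
      _ ≤ (1 + (lam : ℤ) * ((m + redNum J I).choose (redNum J I) - 1)) * f0J := by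
        gcongr
        nlinarith [(by exact_mod_cast hlam_pos : (1 : ℤ) ≤ lam),
          (by exact_mod_cast hchoose : (1 : ℤ) ≤ (m + redNum J I).choose (redNum J I))]

/-- Let `(R, m)` be a Noetherian local ring of dimension `d ≥ 1`, `J` an `m`-primary ideal,
and `I = (J, h₁, …, h_m)` integral over `J` with reduction number `s = red_J(I)`. Then
`f₀(I) ≤ (1 + λ(R/(J:I))·[C(m+s, s) − 1])·f₀(J)`. -/
theorem f0_le_f0_bound
    (R : Type*) [CommRing R] [IsNoetherianRing R] [IsLocalRing R]
    (d : ℕ) (hd : 1 ≤ d) (hdim : ringKrullDim R = d)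
    (J I : Ideal R) (m : ℕ) (h : Fin m → R) (hJI : I = J ⊔ Ideal.span (Set.range h))
    (hJ : J.radical = maximalIdeal R) (hI : I.radical = maximalIdeal R)
    (hred : IsReduction J I)
    (f0J f0I : ℕ) (hf0J : HasFiberMult J d f0J) (hf0I : HasFiberMult I d f0I)
    (lam : ℕ) (hlam : mLength R (R ⧸ (Submodule.colon J I)) = (lam : WithBot ℕ∞)) :
    (f0I : ℤ) ≤ (1 + (lam : ℤ) * ((m + redNum J I).choose (redNum J I) - 1)) * f0J :=
  f0_le_f0_bound_general R d J I m h hJI hred f0J f0I hf0J hf0I lam hlam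
end

section
/- Let (R, m) be a 1-dimensional Cohen–Macaulay Noetherian local ring with infinite residue field, and let x ∈ m^s be a parameter. Then λ(R/(x)) ≥ s · e₀(m), where e₀(m) is the multiplicity of R. -/
open Filter IsLocalRing Polynomial

/-- `R` is a Cohen–Macaulay local ring of dimension `d`: there is a regular sequence of
length `d` inside the maximal ideal. -/
def IsCohenMacaulayLocalOfDim (R : Type*) [CommRing R] [IsLocalRing R] (d : ℕ) : Prop :=
  ∃ xs : List R, xs.length = d ∧ (∀ x ∈ xs, x ∈ maximalIdeal R) ∧
    RingTheory.Sequence.IsRegular R xs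

/-- `R` is a Gorenstein local ring of dimension `d`: it is Cohen–Macaulay of dimension `d`
and some system of parameters (maximal regular sequence in `m`) generates an irreducible
ideal. -/
def IsGorensteinLocalOfDim (R : Type*) [CommRing R] [IsLocalRing R] (d : ℕ) : Prop :=
  ∃ xs : List R, xs.length = d ∧ (∀ x ∈ xs, x ∈ maximalIdeal R) ∧
    RingTheory.Sequence.IsRegular R xs ∧ InfIrred (Ideal.span {x | x ∈ xs})

/-!
Since `x ∈ mˢ` we have `(xⁿ) ⊆ m^{sn}`, so `λ(R/m^{sn}) ≤ λ(R/(xⁿ)) = n·λ(R/(x))`, the last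
equality because `x` is a nonzerodivisor. In dimension one the Hilbert–Samuel function is
eventually `e₀·k + c`, so `e₀·s·n + c ≤ n·λ(R/(x))` for all large `n`; dividing by `n` and
letting `n → ∞` gives `s·e₀ ≤ λ(R/(x))`.
-/

theorem mLength_eq_length (R M : Type*) [CommRing R] [AddCommGroup M] [Module R M] :
    mLength R M = Module.length R M :=
  (Module.coe_length R M).symm

theorem length_quotient_pow_mul_le_nsmul_ord {R : Type*} [CommRing R] {I : Ideal R} {s : ℕ}
    {x : R} (hx : x ∈ I ^ s) (hxreg : x ∈ nonZeroDivisors R) (n : ℕ) :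
    Module.length R (R ⧸ I ^ (s * n)) ≤ n • Ring.ord R x := by
  have hle : Ideal.span {x ^ n} ≤ I ^ (s * n) := by
    rw [Ideal.span_le, Set.singleton_subset_iff, pow_mul]
    exact Ideal.pow_mem_pow hx n
  rw [← Ring.ord_pow hxreg]
  exact Module.length_le_of_surjective _ (Submodule.factor_surjective hle)

theorem HasMultiplicity.exists_eventually_eq_linear {R : Type*} [CommRing R] {I : Ideal R}
    {e0 : ℤ} (he0 : HasMultiplicity I 1 e0) :
    ∃ (hilb : ℕ → ℕ) (c : ℚ), (∀ n, Module.length R (R ⧸ I ^ n) = hilb n) ∧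
      ∀ᶠ n in atTop, (hilb n : ℚ) = e0 * n + c := by
  obtain ⟨p, hilb, hdeg, hlen, hev⟩ := he0
  have hp : p = C (p.coeff 0) :=
    eq_C_of_degree_le_zero (Nat.WithBot.lt_one_iff_le_zero.mp (by exact_mod_cast hdeg))
  refine ⟨hilb, p.coeff 0, fun n => ?_, hev.mono fun n hn => ?_⟩
  · exact_mod_cast (mLength_eq_length R _).symm.trans (hlen n)
  · rw [hn, hp, eval_C]
    simp

theorem le_of_eventually_mul_add_le {a b c : ℚ} (h : ∀ᶠ n : ℕ in atTop, a * n + c ≤ b * n) :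
    a ≤ b := by
  have hlim : Tendsto (fun n : ℕ => a + c / n) atTop (nhds a) := by
    simpa using tendsto_const_nhds.add (tendsto_const_div_atTop_nhds_zero_nat c)
  refine le_of_tendsto hlim ((h.and (eventually_gt_atTop 0)).mono fun n ⟨hn, hpos⟩ => ?_)
  have hpos : (0 : ℚ) < n := by exact_mod_cast hpos
  rw [add_div' _ _ _ hpos.ne', div_le_iff₀ hpos]
  linarith

theorem length_ge_s_mul_e0_general
    (R : Type*) [CommRing R] [IsLocalRing R]
    (s : ℕ) (x : R) (hx : x ∈ (maximalIdeal R) ^ s)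
    (hxreg : x ∈ nonZeroDivisors R)
    (e0 : ℤ) (he0 : HasMultiplicity (maximalIdeal R) 1 e0)
    (lam : ℕ) (hlam : mLength R (R ⧸ Ideal.span {x}) = (lam : WithBot ℕ∞)) :
    (s : ℤ) * e0 ≤ lam := by
  rcases Nat.eq_zero_or_pos s with rfl | hs
  · simp
  have hord : Ring.ord R x = lam := by
    exact_mod_cast (mLength_eq_length R _).symm.trans hlam
  obtain ⟨hilb, c, hlen, hev⟩ := he0.exists_eventually_eq_linear
  obtain ⟨N, hN⟩ := eventually_atTop.mp hev
  suffices h : ∀ᶠ n : ℕ in atTop, ((s : ℤ) * e0 : ℚ) * n + c ≤ (lam : ℚ) * n by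
    exact_mod_cast le_of_eventually_mul_add_le h
  filter_upwards [eventually_ge_atTop N] with n hn
  have hbound : (hilb (s * n) : ℚ) ≤ n * lam := by
    have := length_quotient_pow_mul_le_nsmul_ord hx hxreg n
    rw [hlen, hord, nsmul_eq_mul] at this
    exact_mod_cast this
  have hval := hN (s * n) (hn.trans (Nat.le_mul_of_pos_left n hs))
  push_cast at hval
  calc ((s : ℤ) * e0 : ℚ) * n + c = hilb (s * n) := by rw [hval]; push_cast; ring
    _ ≤ (lam : ℚ) * n := by linarith

/-- Let `(R, m)` be a `1`-dimensional Cohen–Macaulay Noetherian local ring with infinite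
residue field and `x ∈ m^s` a parameter. Then `λ(R/(x)) ≥ s·e₀(m)`. -/
theorem length_ge_s_mul_e0
    (R : Type*) [CommRing R] [IsNoetherianRing R] [IsLocalRing R]
    [Infinite (ResidueField R)]
    (hdim : ringKrullDim R = 1) (hCM : IsCohenMacaulayLocalOfDim R 1)
    (s : ℕ) (hs : 1 ≤ s) (x : R) (hx : x ∈ (maximalIdeal R) ^ s)
    (hxreg : x ∈ nonZeroDivisors R)
    (e0 : ℤ) (he0 : HasMultiplicity (maximalIdeal R) 1 e0)
    (lam : ℕ) (hlam : mLength R (R ⧸ Ideal.span {x}) = (lam : WithBot ℕ∞)) :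
    (s : ℤ) * e0 ≤ lam :=
  length_ge_s_mul_e0_general R s x hx hxreg e0 he0 lam hlam
end
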